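/- For any θ < 1 (including θ ≤ 0), the function f(y) = (1-θ)φ((y-μ)/σ) / [σ(1 - θΦ((y-μ)/σ))²] is a probability density function on ℝ, i.e., f ≥ 0 and ∫_ℝ f(y) dy = 1. -/

import Mathlib

/-!
The density is the derivative of `y ↦ (1 - θ) Φ(z) / (1 - θ Φ(z))` with `z = (y - μ) / σ`.
Since `Φ` increases from `0` to `1` and `t ↦ (1 - θ) t / (1 - θ t)` maps `0 ↦ 0` and `1 ↦ 1`,
the integral is `1 - 0` by the fundamental theorem of calculus on `ℝ`. For `t ∈ [0, 1]` the
denominator `1 - θ t` is at least `min 1 (1 - θ) > 0`, which keeps the density dominated by a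
multiple of the normal one, hence integrable.
-/

open MeasureTheory Filter Topology

noncomputable def stdPdf (x : ℝ) : ℝ := (Real.sqrt (2 * Real.pi))⁻¹ * Real.exp (-(x ^ 2) / 2)

noncomputable def stdCdf (x : ℝ) : ℝ := ∫ t in Set.Iic x, stdPdf t

open ProbabilityTheory Set

lemma stdPdf_eq_gaussianPDFReal : stdPdf = gaussianPDFReal 0 1 := by
  ext x
  simp [stdPdf, gaussianPDFReal]

lemma integrable_stdPdf : Integrable stdPdf :=
  stdPdf_eq_gaussianPDFReal ▸ integrable_gaussianPDFReal 0 1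

lemma continuous_stdPdf : Continuous stdPdf := by
  unfold stdPdf
  fun_prop

lemma stdCdf_eq_cdf_gaussianReal : stdCdf = cdf (gaussianReal 0 1) := by
  ext x
  rw [cdf_eq_real, measureReal_def, gaussianReal_apply_eq_integral _ one_ne_zero,
    ENNReal.toReal_ofReal (setIntegral_nonneg measurableSet_Iic
      fun t _ => gaussianPDFReal_nonneg 0 1 t), stdCdf, stdPdf_eq_gaussianPDFReal]

lemma hasDerivAt_stdCdf (x : ℝ) : HasDerivAt stdCdf (stdPdf x) x := by
  have hsplit : ∀ y, stdCdf y = (∫ t in (0 : ℝ)..y, stdPdf t) + stdCdf 0 := fun y => by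
    rw [← intervalIntegral.integral_Iic_sub_Iic integrable_stdPdf.integrableOn
      integrable_stdPdf.integrableOn, stdCdf, stdCdf, sub_add_cancel]
  refine HasDerivAt.congr_of_eventuallyEq ?_ (Eventually.of_forall hsplit)
  exact (intervalIntegral.integral_hasDerivAt_right integrable_stdPdf.intervalIntegrable
    (continuous_stdPdf.stronglyMeasurableAtFilter _ _) continuous_stdPdf.continuousAt).add_const _

section MarshallOlkin

variable {θ : ℝ}

/-- The Marshall–Olkin transform of a CDF value `t`, with tilt parameter `α = 1 / (1 - θ)`. -/
noncomputable def marshallOlkin (θ t : ℝ) : ℝ := (1 - θ) * t / (1 - θ * t)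

lemma min_one_one_sub_le_one_sub_mul {t : ℝ} (ht : t ∈ Icc (0 : ℝ) 1) :
    min 1 (1 - θ) ≤ 1 - θ * t := by
  rcases le_or_gt θ 0 with h | h
  · exact (min_le_left _ _).trans (by nlinarith [ht.1])
  · exact (min_le_right _ _).trans (by nlinarith [ht.2])

lemma one_sub_mul_pos (hθ : θ < 1) {t : ℝ} (ht : t ∈ Icc (0 : ℝ) 1) : 0 < 1 - θ * t :=
  (lt_min one_pos (sub_pos.2 hθ)).trans_le (min_one_one_sub_le_one_sub_mul ht)

lemma tendsto_marshallOlkin (hθ : θ < 1) {α : Type*} {l : Filter α} {F : α → ℝ} {c : ℝ}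
    (hF : Tendsto F l (𝓝 c)) (hc : c ∈ Icc (0 : ℝ) 1) :
    Tendsto (fun x => marshallOlkin θ (F x)) l (𝓝 (marshallOlkin θ c)) :=
  ((hF.const_mul _).div (tendsto_const_nhds.sub (hF.const_mul _)) (one_sub_mul_pos hθ hc).ne')

lemma HasDerivAt.marshallOlkin {F : ℝ → ℝ} {f x : ℝ} (hF : HasDerivAt F f x)
    (hne : 1 - θ * F x ≠ 0) :
    HasDerivAt (fun y => marshallOlkin θ (F y)) ((1 - θ) * f / (1 - θ * F x) ^ 2) x :=
  ((hF.const_mul (1 - θ)).div ((hF.const_mul θ).const_sub 1) hne).congr_deriv (by ring)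

variable {F f : ℝ → ℝ}

lemma integrable_marshallOlkin_density (hθ : θ < 1) (hF : Continuous F)
    (hF01 : ∀ x, F x ∈ Icc (0 : ℝ) 1) (hf : Integrable f) :
    Integrable fun x => (1 - θ) * f x / (1 - θ * F x) ^ 2 := by
  set m := min 1 (1 - θ)
  have hm : 0 < m := lt_min one_pos (sub_pos.2 hθ)
  have hbound : ∀ x, ‖(1 - θ) / (1 - θ * F x) ^ 2‖ ≤ (1 - θ) / m ^ 2 := fun x => by
    rw [Real.norm_of_nonneg (div_nonneg (sub_pos.2 hθ).le (sq_nonneg _))]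
    exact div_le_div_of_nonneg_left (sub_pos.2 hθ).le (by positivity)
      (pow_le_pow_left₀ hm.le (min_one_one_sub_le_one_sub_mul (hF01 x)) 2)
  have hcont : Continuous fun x => (1 - θ) / (1 - θ * F x) ^ 2 :=
    continuous_const.div (by fun_prop) fun x => pow_ne_zero 2 (one_sub_mul_pos hθ (hF01 x)).ne'
  exact (hf.bdd_mul hcont.aestronglyMeasurable (Eventually.of_forall hbound)).congr
    (Eventually.of_forall fun x => by ring)

theorem integral_marshallOlkin_density (hθ : θ < 1) (hF : ∀ x, HasDerivAt F (f x) x)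
    (hF01 : ∀ x, F x ∈ Icc (0 : ℝ) 1) (hf : Integrable f)
    (hbot : Tendsto F atBot (𝓝 0)) (htop : Tendsto F atTop (𝓝 1)) :
    ∫ x, (1 - θ) * f x / (1 - θ * F x) ^ 2 = 1 := by
  have hcont : Continuous F := continuous_iff_continuousAt.2 fun x => (hF x).continuousAt
  rw [integral_of_hasDerivAt_of_tendsto
    (fun x => (hF x).marshallOlkin (one_sub_mul_pos hθ (hF01 x)).ne')
    (integrable_marshallOlkin_density hθ hcont hF01 hf)
    (tendsto_marshallOlkin hθ hbot ⟨le_rfl, zero_le_one⟩)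
    (tendsto_marshallOlkin hθ htop ⟨zero_le_one, le_rfl⟩)]
  simp [marshallOlkin, div_self (sub_pos.2 hθ).ne']

end MarshallOlkin

/-- for any θ < 1 the normal-geometric density
`f(y) = (1-θ)φ(z)/[σ(1-θΦ(z))²]` is a probability density on ℝ. -/
theorem ng_is_density (μ σ θ : ℝ) (hσ : 0 < σ) (hθ : θ < 1) :
    (∀ y : ℝ, 0 ≤ (1 - θ) * stdPdf ((y - μ) / σ)
        / (σ * (1 - θ * stdCdf ((y - μ) / σ)) ^ 2)) ∧
    ∫ y : ℝ, (1 - θ) * stdPdf ((y - μ) / σ)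
        / (σ * (1 - θ * stdCdf ((y - μ) / σ)) ^ 2) = 1 := by
  refine ⟨fun y => div_nonneg ?_ ?_, ?_⟩
  · exact mul_nonneg (sub_pos.2 hθ).le (stdPdf_eq_gaussianPDFReal ▸ gaussianPDFReal_nonneg 0 1 _)
  · exact mul_nonneg hσ.le (sq_nonneg _)
  have hderiv : ∀ y, HasDerivAt (fun y => stdCdf ((y - μ) / σ)) (stdPdf ((y - μ) / σ) / σ) y :=
    fun y => by
      have := (hasDerivAt_stdCdf _).comp y (((hasDerivAt_id' y).sub_const μ).div_const σ)
      rwa [one_div, ← div_eq_mul_inv] at this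
  have hint : Integrable fun y => stdPdf ((y - μ) / σ) / σ :=
    ((integrable_stdPdf.comp_div hσ.ne').comp_sub_right μ).div_const σ
  have hz_top := (tendsto_atTop_add_const_right _ (-μ) tendsto_id).atTop_div_const hσ
  have hz_bot := (tendsto_atBot_add_const_right _ (-μ) tendsto_id).atBot_div_const hσ
  rw [stdCdf_eq_cdf_gaussianReal] at hderiv ⊢
  convert integral_marshallOlkin_density hθ hderiv (fun _ => ⟨cdf_nonneg _ _, cdf_le_one _ _⟩) hint
    ((tendsto_cdf_atBot _).comp hz_bot) ((tendsto_cdf_atTop _).comp hz_top) using 3 with y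
  rw [mul_div_assoc', div_div]
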